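/- arXiv:0803.2506 — 2 statements merged into one kernel-verified Lean document; each statement's English description precedes it below -/
import Mathlib

section
/- Let p be a prime with p ≡ 1 (mod 6), let 4p = A² + 27B² with A ≡ 1 (mod 3) and B > 0, and let n_{ik} be the transition numbers of the cubic residue cosets. Then A = 9·n₁₂ - p - 1 and B = |n₀₂ - n₀₁|. -/
/-- `Gcoset p g k` is the coset `G_k = {g^j : j ≡ k (mod 3)}` of the subgroup `G₀` of
cubic residues in `(ℤ/pℤ)*`, where `g` is a fixed generator of `(ℤ/pℤ)*`. -/
def Gcoset (p : ℕ) (g : ZMod p) (k : ZMod 3) : Set (ZMod p) :=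
  {x | ∃ j : ℕ, (j : ZMod 3) = k ∧ x = g ^ j}

/-- `transNum p g d i k` is the transition number `n_{ik}(d)`: the number of
`b ∈ {1,…,p-1}`, `b ≠ p-d`, with `b ∈ G_i` and `b+d ∈ G_k`. -/
noncomputable def transNum (p : ℕ) (g : ZMod p) (d : ℕ) (i k : ZMod 3) : ℕ :=
  Nat.card {b : ℕ // 1 ≤ b ∧ b ≤ p - 1 ∧ b ≠ p - d ∧
    (b : ZMod p) ∈ Gcoset p g i ∧ (b : ZMod p) + (d : ZMod p) ∈ Gcoset p g k}

/-!
A character `χ` of order 3 of `(ℤ/pℤ)ˣ` takes the value `ζ ^ k` on `G_k`, where `ζ = χ g` is a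
primitive cube root of unity; so the cosets are pairwise disjoint and `-1 ∈ G₀`. Hence the Jacobi
sum `J(χ, χ) = ∑ χ(x) χ(x + 1)` equals `∑ n_{ik} ζ^(i+k)`, and the symmetries `n_{ik} = n_{ki}`
(via `x ↦ -1 - x`) and `n_{ik} = n_{-i,k-i}` (via `x ↦ x⁻¹`) reduce it to
`(n₀₀ + 2 n₁₂) + 3 n₀₁ ζ + 3 n₀₂ ζ²`. Its norm `J(χ, χ) J(χ⁻¹, χ⁻¹)` is `p`; eliminating `n₀₀`
with the row sums `∑ₖ n_{ik} = (p - 1) / 3 - [i = 0]` gives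
`4p = (9 n₁₂ - p - 1)² + 27 (n₀₂ - n₀₁)²`. Such a representation with first term `≡ 1 (mod 3)`
and nonnegative second term is unique: for two of them, `(AC ± 27BD)² + 27(AD ∓ BC)² = 16p²`
and `p` divides `AD ∓ BC` for one choice of sign, which forces `AD = ±BC`.
-/

open Finset

lemma ZMod.sum_univ_three {M : Type*} [AddCommMonoid M] (f : ZMod 3 → M) :
    ∑ i, f i = f 0 + f 1 + f 2 :=
  Fin.sum_univ_three f

lemma jacobiSum_self_eq {R R' : Type*} [CommRing R] [Fintype R] [CommRing R']
    (χ : MulChar R R') : jacobiSum χ χ = χ (-1) * ∑ x, χ x * χ (x + 1) := by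
  rw [jacobiSum, ← Equiv.sum_comp (Equiv.neg R), mul_sum]
  refine sum_congr rfl fun x _ ↦ ?_
  rw [Equiv.neg_apply, sub_neg_eq_add, add_comm 1, neg_eq_neg_one_mul, map_mul, mul_assoc]

lemma Int.eq_of_sq_add_27_mul_sq_eq_of_dvd {q A B C D : ℤ} (hq : q ≠ 0) (hB : 0 < B)
    (hD : 0 ≤ D) (h₁ : 4 * q = A ^ 2 + 27 * B ^ 2) (h₂ : 4 * q = C ^ 2 + 27 * D ^ 2)
    (hdvd : q ∣ A * D - B * C) : A = C ∧ B = D := by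
  obtain ⟨k, hk⟩ := hdvd
  have hid : (A * C + 27 * B * D) ^ 2 + 27 * (k * q) ^ 2 = 16 * q ^ 2 := by
    rw [mul_comm k, ← hk]
    linear_combination -(C ^ 2 + 27 * D ^ 2) * h₁ - 4 * q * h₂
  have hk₀ : k = 0 := by
    by_contra hk₀
    have hq2 : 0 < q ^ 2 := by positivity
    have hk2 : 0 < k ^ 2 := by positivity
    nlinarith [sq_nonneg (A * C + 27 * B * D)]
  have hBD : D = B := by
    rw [hk₀, mul_zero] at hk
    have h : (4 * q) * (D ^ 2 - B ^ 2) = 0 := by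
      linear_combination D ^ 2 * h₁ - B ^ 2 * h₂ + (A * D + B * C) * hk
    have h' := (mul_eq_zero.mp h).resolve_left (mul_ne_zero four_ne_zero hq)
    exact (sq_eq_sq₀ hD hB.le).mp (sub_eq_zero.mp h')
  subst hBD
  rw [hk₀, mul_zero, sub_eq_zero, mul_comm] at hk
  exact ⟨mul_left_cancel₀ hB.ne' hk, rfl⟩

lemma Int.eq_of_sq_add_27_mul_sq_eq {q A B C D : ℤ} (hq : Prime q) (hA : A % 3 = 1)
    (hC : C % 3 = 1) (hB : 0 < B) (hD : 0 ≤ D) (h₁ : 4 * q = A ^ 2 + 27 * B ^ 2)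
    (h₂ : 4 * q = C ^ 2 + 27 * D ^ 2) : A = C ∧ B = D := by
  have hdvd : q ∣ (A * D - B * C) * (A * D - B * -C) :=
    ⟨4 * (D ^ 2 - B ^ 2), by linear_combination B ^ 2 * h₂ - D ^ 2 * h₁⟩
  rcases hq.dvd_or_dvd hdvd with h | h
  · exact Int.eq_of_sq_add_27_mul_sq_eq_of_dvd hq.ne_zero hB hD h₁ h₂ h
  · have := Int.eq_of_sq_add_27_mul_sq_eq_of_dvd hq.ne_zero hB hD h₁ (by rwa [neg_sq]) h
    omega

section

variable {p : ℕ} {g : ZMod p}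

def IsGenerator (g : ZMod p) : Prop :=
  ∀ x : ZMod p, x ≠ 0 → ∃ j : ℕ, x = g ^ j

lemma one_mem_Gcoset_zero : (1 : ZMod p) ∈ Gcoset p g 0 := ⟨0, by simp, by simp⟩

lemma mem_Gcoset_one : g ∈ Gcoset p g 1 := ⟨1, by simp, by simp⟩

lemma mul_mem_Gcoset_add {x y : ZMod p} {i k : ZMod 3} (hx : x ∈ Gcoset p g i)
    (hy : y ∈ Gcoset p g k) : x * y ∈ Gcoset p g (i + k) := by
  obtain ⟨a, rfl, rfl⟩ := hx
  obtain ⟨b, rfl, rfl⟩ := hy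
  exact ⟨a + b, by push_cast; rfl, (pow_add g a b).symm⟩

lemma MulChar.apply_of_mem_Gcoset {R : Type*} [CommMonoidWithZero R] {χ : MulChar (ZMod p) R}
    (hχ : χ g ^ 3 = 1) {x : ZMod p} {k : ZMod 3} (hx : x ∈ Gcoset p g k) :
    χ x = χ g ^ k.val := by
  obtain ⟨j, rfl, rfl⟩ := hx
  rw [map_pow, ZMod.val_natCast, ← pow_eq_pow_mod j hχ]

open scoped Classical in
noncomputable def cosetFinset [NeZero p] (g : ZMod p) (k : ZMod 3) : Finset (ZMod p) :=
  univ.filter (· ∈ Gcoset p g k)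

open scoped Classical in
noncomputable def transSet [NeZero p] (g : ZMod p) (i k : ZMod 3) : Finset (ZMod p) :=
  univ.filter fun x ↦ x ∈ Gcoset p g i ∧ x + 1 ∈ Gcoset p g k

@[simp] lemma mem_cosetFinset [NeZero p] {x : ZMod p} {k : ZMod 3} :
    x ∈ cosetFinset g k ↔ x ∈ Gcoset p g k := by
  simp [cosetFinset]

@[simp] lemma mem_transSet [NeZero p] {x : ZMod p} {i k : ZMod 3} :
    x ∈ transSet g i k ↔ x ∈ Gcoset p g i ∧ x + 1 ∈ Gcoset p g k := by
  simp [transSet]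

variable [Fact p.Prime]

lemma ne_zero_of_mem_Gcoset (hg₀ : g ≠ 0) {x : ZMod p} {k : ZMod 3} (hx : x ∈ Gcoset p g k) :
    x ≠ 0 := by
  obtain ⟨j, -, rfl⟩ := hx
  exact pow_ne_zero j hg₀

lemma transNum_one_eq_card (hg₀ : g ≠ 0) (i k : ZMod 3) :
    transNum p g 1 i k = #(transSet g i k) := by
  have hp := (Fact.out : p.Prime).one_lt
  -- `1 ≤ b` and `b ≠ p - 1` are automatic: `b` and `b + 1` lie in cosets, which avoid `0`.
  have himage : {b : ℕ | 1 ≤ b ∧ b ≤ p - 1 ∧ b ≠ p - 1 ∧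
      (b : ZMod p) ∈ Gcoset p g i ∧ (b : ZMod p) + ((1 : ℕ) : ZMod p) ∈ Gcoset p g k} =
      ZMod.val '' (↑(transSet g i k) : Set (ZMod p)) := by
    ext b
    simp only [Set.mem_ofPred_eq, Set.mem_image, mem_coe, mem_transSet, Nat.cast_one]
    constructor
    · rintro ⟨-, hbp, -, hi, hk⟩
      exact ⟨b, ⟨hi, hk⟩, ZMod.val_cast_of_lt (by omega)⟩
    · rintro ⟨x, ⟨hi, hk⟩, rfl⟩
      have hx₀ : x.val ≠ 0 := (ZMod.val_ne_zero x).mpr (ne_zero_of_mem_Gcoset hg₀ hi)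
      have hx₁ : x.val ≠ p - 1 := fun h ↦ ne_zero_of_mem_Gcoset hg₀ hk <| by
        rw [← ZMod.natCast_zmod_val x, h, Nat.cast_sub hp.le, ZMod.natCast_self]; ring
      rw [ZMod.natCast_zmod_val]
      exact ⟨by omega, by have := ZMod.val_lt x; omega, hx₁, hi, hk⟩
  rw [transNum, ← Set.coe_ofPred, Nat.card_coe_set_eq, himage,
    Set.ncard_image_of_injective _ (ZMod.val_injective p), Set.ncard_coe_finset]

lemma exists_mulChar_orderOf_eq_three (h3 : 3 ∣ p - 1) :
    ∃ χ : MulChar (ZMod p) ℂ, orderOf χ = 3 :=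
  MulChar.exists_mulChar_orderOf (ZMod p) (by rwa [ZMod.card])
    (Complex.isPrimitiveRoot_exp 3 three_ne_zero)

namespace IsGenerator

variable (hg : IsGenerator g)
include hg

lemma ne_zero (hp₂ : p ≠ 2) : g ≠ 0 := by
  have : Fact (2 < p) := ⟨lt_of_le_of_ne (Fact.out : p.Prime).two_le (Ne.symm hp₂)⟩
  rintro rfl
  obtain ⟨j, hj⟩ := hg (-1) (neg_ne_zero.mpr one_ne_zero)
  rcases j with _ | j
  · exact ZMod.neg_one_ne_one (hj.trans (pow_zero _))
  · exact neg_ne_zero.mpr one_ne_zero (hj.trans (zero_pow j.succ_ne_zero))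

lemma exists_mem_Gcoset {x : ZMod p} (hx : x ≠ 0) : ∃ k, x ∈ Gcoset p g k := by
  obtain ⟨j, hj⟩ := hg x hx
  exact ⟨j, j, rfl, hj⟩

lemma isPrimitiveRoot_apply {R : Type*} [CommMonoidWithZero R] (hg₀ : g ≠ 0)
    {χ : MulChar (ZMod p) R} (hχ : orderOf χ = 3) : IsPrimitiveRoot (χ g) 3 := by
  have hg₃ : χ g ^ 3 = 1 := by
    rw [← χ.pow_apply' three_ne_zero, ← hχ, pow_orderOf_eq_one,
      MulChar.one_apply (Ne.isUnit hg₀)]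
  have hg₁ : χ g ≠ 1 := by
    intro h
    have : χ = 1 := MulChar.eq_one_iff.mpr fun a ↦ by
      obtain ⟨j, hj⟩ := hg a a.ne_zero
      rw [hj, map_pow, h, one_pow]
    rw [this, orderOf_one] at hχ
    exact absurd hχ (by norm_num)
  have : Fact (Nat.Prime 3) := ⟨Nat.prime_three⟩
  rw [← orderOf_eq_prime hg₃ hg₁]
  exact IsPrimitiveRoot.orderOf _

variable (h3 : 3 ∣ p - 1)
include h3

lemma eq_of_mem_Gcoset {x : ZMod p} {i k : ZMod 3} (hi : x ∈ Gcoset p g i)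
    (hk : x ∈ Gcoset p g k) : i = k := by
  obtain ⟨χ, hχ⟩ := exists_mulChar_orderOf_eq_three h3
  have hζ := hg.isPrimitiveRoot_apply (hg.ne_zero (by omega)) hχ
  have h := (χ.apply_of_mem_Gcoset hζ.pow_eq_one hi).symm.trans
    (χ.apply_of_mem_Gcoset hζ.pow_eq_one hk)
  exact ZMod.val_injective 3 (hζ.pow_inj (ZMod.val_lt i) (ZMod.val_lt k) h)

lemma neg_one_mem_Gcoset_zero : (-1 : ZMod p) ∈ Gcoset p g 0 := by
  obtain ⟨χ, hχ⟩ := exists_mulChar_orderOf_eq_three h3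
  have hζ := hg.isPrimitiveRoot_apply (hg.ne_zero (by omega)) hχ
  obtain ⟨k, hk⟩ := hg.exists_mem_Gcoset (neg_ne_zero.mpr one_ne_zero)
  have h : χ g ^ k.val = χ g ^ (0 : ZMod 3).val := by
    rw [← χ.apply_of_mem_Gcoset hζ.pow_eq_one hk, ZMod.val_zero, pow_zero,
      MulChar.val_neg_one_eq_one_of_odd_order (by decide) (hχ ▸ pow_orderOf_eq_one χ)]
  rwa [ZMod.val_injective 3 (hζ.pow_inj (ZMod.val_lt _) (ZMod.val_lt _) h)] at hk

lemma neg_mem_Gcoset {x : ZMod p} {k : ZMod 3} (hx : x ∈ Gcoset p g k) :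
    -x ∈ Gcoset p g k := by
  simpa using mul_mem_Gcoset_add (hg.neg_one_mem_Gcoset_zero h3) hx

lemma inv_mem_Gcoset {x : ZMod p} {k : ZMod 3} (hx : x ∈ Gcoset p g k) :
    x⁻¹ ∈ Gcoset p g (-k) := by
  have hg₀ := hg.ne_zero (by omega)
  obtain ⟨i, hi⟩ := hg.exists_mem_Gcoset (inv_ne_zero (ne_zero_of_mem_Gcoset hg₀ hx))
  have h := mul_mem_Gcoset_add hi hx
  rw [inv_mul_cancel₀ (ne_zero_of_mem_Gcoset hg₀ hx)] at h
  rwa [← eq_neg_of_add_eq_zero_left (hg.eq_of_mem_Gcoset h3 h one_mem_Gcoset_zero)]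

lemma card_cosetFinset_add_one (k : ZMod 3) :
    #(cosetFinset g (k + 1)) = #(cosetFinset g k) := by
  have hg₀ := hg.ne_zero (by omega)
  refine (card_nbij' (g⁻¹ * ·) (g * ·) (fun x hx ↦ ?_) (fun x hx ↦ ?_)
    (fun x _ ↦ mul_inv_cancel_left₀ hg₀ x) (fun x _ ↦ inv_mul_cancel_left₀ hg₀ x))
  · simpa using mul_mem_Gcoset_add (hg.inv_mem_Gcoset h3 mem_Gcoset_one) (mem_cosetFinset.mp hx)
  · simpa [add_comm] using mul_mem_Gcoset_add mem_Gcoset_one (mem_cosetFinset.mp hx)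

lemma card_cosetFinset (k : ZMod 3) : #(cosetFinset g k) = (p - 1) / 3 := by
  have hk : ∀ k, #(cosetFinset g k) = #(cosetFinset g 0) := by
    have h1 : #(cosetFinset g 1) = #(cosetFinset g 0) := hg.card_cosetFinset_add_one h3 0
    have h2 : #(cosetFinset g 2) = #(cosetFinset g 1) := hg.card_cosetFinset_add_one h3 1
    intro k
    fin_cases k
    exacts [rfl, h1, h2.trans h1]
  have hunion : univ.biUnion (cosetFinset g) = univ.erase 0 := by
    ext x
    simp only [mem_biUnion, mem_univ, true_and, mem_cosetFinset, mem_erase, and_true]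
    exact ⟨fun ⟨k, hx⟩ ↦ ne_zero_of_mem_Gcoset (hg.ne_zero (by omega)) hx,
      hg.exists_mem_Gcoset⟩
  have hdisj : (↑(univ : Finset (ZMod 3)) : Set (ZMod 3)).PairwiseDisjoint (cosetFinset g) :=
    fun i _ k _ hik ↦ disjoint_left.mpr fun x hi hk ↦
      hik (hg.eq_of_mem_Gcoset h3 (mem_cosetFinset.mp hi) (mem_cosetFinset.mp hk))
  have hsum := card_biUnion hdisj
  rw [hunion, card_erase_of_mem (mem_univ _), card_univ, ZMod.card, sum_congr rfl fun k _ ↦ hk k,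
    sum_const, card_univ, ZMod.card, smul_eq_mul] at hsum
  rw [hk]
  omega

lemma card_transSet_comm (i k : ZMod 3) : #(transSet g i k) = #(transSet g k i) := by
  refine card_nbij' (fun x ↦ -1 - x) (fun x ↦ -1 - x) (fun x hx ↦ ?_) (fun x hx ↦ ?_)
    (fun x _ ↦ by simp) (fun x _ ↦ by simp) <;>
  · obtain ⟨hi, hk⟩ := mem_transSet.mp hx
    simp only [mem_coe, mem_transSet]
    constructor
    · rw [show -1 - x = -(x + 1) by ring]
      exact hg.neg_mem_Gcoset h3 hk
    · rw [show -1 - x + 1 = -x by ring]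
      exact hg.neg_mem_Gcoset h3 hi

lemma card_transSet_inv (i k : ZMod 3) : #(transSet g i k) = #(transSet g (-i) (k - i)) := by
  have hinv : ∀ {i k x}, x ∈ transSet g i k → x⁻¹ ∈ transSet g (-i) (k - i) := by
    intro i k x hx
    obtain ⟨hi, hk⟩ := mem_transSet.mp hx
    have hx₀ := ne_zero_of_mem_Gcoset (hg.ne_zero (by omega)) hi
    refine mem_transSet.mpr ⟨hg.inv_mem_Gcoset h3 hi, ?_⟩
    have h := mul_mem_Gcoset_add hk (hg.inv_mem_Gcoset h3 hi)
    rwa [add_mul, mul_inv_cancel₀ hx₀, one_mul, add_comm 1, ← sub_eq_add_neg] at h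
  refine card_nbij' (·⁻¹) (·⁻¹) (fun x hx ↦ hinv hx) (fun x hx ↦ ?_)
    (fun x _ ↦ inv_inv x) (fun x _ ↦ inv_inv x)
  simpa using hinv hx

lemma card_transSet_one_one : #(transSet g 1 1) = #(transSet g 0 2) :=
  (hg.card_transSet_inv h3 1 1).trans (hg.card_transSet_comm h3 2 0)

lemma card_transSet_two_two : #(transSet g 2 2) = #(transSet g 0 1) :=
  (hg.card_transSet_inv h3 2 2).trans (hg.card_transSet_comm h3 1 0)

lemma sum_card_transSet (i : ZMod 3) :
    ∑ k, #(transSet g i k) = #((cosetFinset g i).erase (-1)) := by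
  have hunion : univ.biUnion (transSet g i) = (cosetFinset g i).erase (-1) := by
    ext x
    simp only [mem_biUnion, mem_univ, true_and, mem_transSet, mem_erase, mem_cosetFinset]
    constructor
    · rintro ⟨k, hi, hk⟩
      exact ⟨fun h ↦ ne_zero_of_mem_Gcoset (hg.ne_zero (by omega)) hk (by simp [h]), hi⟩
    · rintro ⟨hx, hi⟩
      obtain ⟨k, hk⟩ :=
        hg.exists_mem_Gcoset (x := x + 1) fun h ↦ hx (eq_neg_of_add_eq_zero_left h)
      exact ⟨k, hi, hk⟩
  have hdisj : (↑(univ : Finset (ZMod 3)) : Set (ZMod 3)).PairwiseDisjoint (transSet g i) :=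
    fun k _ l _ hkl ↦ disjoint_left.mpr fun x hk hl ↦
      hkl (hg.eq_of_mem_Gcoset h3 (mem_transSet.mp hk).2 (mem_transSet.mp hl).2)
  rw [← hunion, card_biUnion hdisj]

lemma sum_apply_mul_apply_add_one {R : Type*} [CommRing R] (ψ : MulChar (ZMod p) R)
    (hψ : ψ g ^ 3 = 1) :
    ∑ x, ψ x * ψ (x + 1) =
      ∑ ik : ZMod 3 × ZMod 3, #(transSet g ik.1 ik.2) * ψ g ^ (ik.1.val + ik.2.val) := by
  have hdisj : (↑(univ : Finset (ZMod 3 × ZMod 3)) : Set (ZMod 3 × ZMod 3)).PairwiseDisjoint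
      fun ik ↦ transSet g ik.1 ik.2 :=
    fun ik _ jl _ hne ↦ disjoint_left.mpr fun x hik hjl ↦ hne <| Prod.ext
      (hg.eq_of_mem_Gcoset h3 (mem_transSet.mp hik).1 (mem_transSet.mp hjl).1)
      (hg.eq_of_mem_Gcoset h3 (mem_transSet.mp hik).2 (mem_transSet.mp hjl).2)
  have hzero : ∀ x ∈ univ,
      x ∉ univ.biUnion (fun ik : ZMod 3 × ZMod 3 ↦ transSet g ik.1 ik.2) →
        ψ x * ψ (x + 1) = 0 := by
    intro x _ hx
    have hx' : x = 0 ∨ x + 1 = 0 := by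
      by_contra! h
      obtain ⟨i, hi⟩ := hg.exists_mem_Gcoset h.1
      obtain ⟨k, hk⟩ := hg.exists_mem_Gcoset h.2
      exact hx (mem_biUnion.mpr ⟨(i, k), mem_univ _, mem_transSet.mpr ⟨hi, hk⟩⟩)
    rcases hx' with h | h <;> simp [h, MulChar.map_zero]
  rw [← sum_subset (subset_univ _) hzero, sum_biUnion hdisj]
  refine sum_congr rfl fun ik _ ↦ ?_
  have hconst : ∀ x ∈ transSet g ik.1 ik.2,
      ψ x * ψ (x + 1) = ψ g ^ (ik.1.val + ik.2.val) := by
    intro x hx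
    obtain ⟨hi, hk⟩ := mem_transSet.mp hx
    rw [ψ.apply_of_mem_Gcoset hψ hi, ψ.apply_of_mem_Gcoset hψ hk, pow_add]
  rw [sum_congr rfl hconst, sum_const, nsmul_eq_mul]

lemma jacobiSum_self_eq_of_pow_three {R : Type*} [CommRing R] (ψ : MulChar (ZMod p) R)
    (hψ : ψ g ^ 3 = 1) :
    jacobiSum ψ ψ = #(transSet g 0 0) + 2 * #(transSet g 1 2)
      + 3 * #(transSet g 0 1) * ψ g + 3 * #(transSet g 0 2) * ψ g ^ 2 := by
  have hneg : ψ (-1) = 1 := by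
    rw [ψ.apply_of_mem_Gcoset hψ (hg.neg_one_mem_Gcoset_zero h3), ZMod.val_zero, pow_zero]
  rw [jacobiSum_self_eq, hneg, one_mul, hg.sum_apply_mul_apply_add_one h3 ψ hψ,
    Fintype.sum_prod_type]
  simp only [ZMod.sum_univ_three, hg.card_transSet_one_one h3, hg.card_transSet_two_two h3,
    hg.card_transSet_comm h3 1 0, hg.card_transSet_comm h3 2 0, hg.card_transSet_comm h3 2 1]
  simp only [show (0 : ZMod 3).val = 0 from rfl, show (1 : ZMod 3).val = 1 from rfl,
    show (2 : ZMod 3).val = 2 from rfl]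
  linear_combination (#(transSet g 0 1) * ψ g + 2 * #(transSet g 1 2) : R) * hψ

lemma sum_card_transSet_zero :
    #(transSet g 0 0) + #(transSet g 0 1) + #(transSet g 0 2) + 1 = (p - 1) / 3 := by
  have h := hg.sum_card_transSet h3 0
  rw [ZMod.sum_univ_three, card_erase_of_mem (mem_cosetFinset.mpr (hg.neg_one_mem_Gcoset_zero h3)),
    hg.card_cosetFinset h3] at h
  have : 1 ≤ (p - 1) / 3 := by have := (Fact.out : p.Prime).two_le; omega
  omega

lemma sum_card_transSet_one :
    #(transSet g 0 1) + #(transSet g 0 2) + #(transSet g 1 2) = (p - 1) / 3 := by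
  have h := hg.sum_card_transSet h3 1
  have hneg : (-1 : ZMod p) ∉ cosetFinset g 1 := fun h ↦ zero_ne_one <|
    hg.eq_of_mem_Gcoset h3 (hg.neg_one_mem_Gcoset_zero h3) (mem_cosetFinset.mp h)
  rwa [ZMod.sum_univ_three, erase_eq_of_notMem hneg, hg.card_cosetFinset h3,
    hg.card_transSet_comm h3 1 0, hg.card_transSet_one_one h3] at h

lemma norm_jacobiSum {u v w : ℤ} (hu : u = #(transSet g 0 0) + 2 * #(transSet g 1 2))
    (hv : v = 3 * #(transSet g 0 1)) (hw : w = 3 * #(transSet g 0 2)) :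
    u ^ 2 + v ^ 2 + w ^ 2 - u * v - v * w - w * u = p := by
  obtain ⟨χ, hχ⟩ := exists_mulChar_orderOf_eq_three h3
  have hζ := hg.isPrimitiveRoot_apply (hg.ne_zero (by omega)) hχ
  set ζ := χ g
  have hζ₃ : ζ ^ 3 = 1 := hζ.pow_eq_one
  have hζ₂ : ζ ^ 2 + ζ + 1 = 0 := by
    have h := hζ.geom_sum_eq_zero (by norm_num)
    simp only [sum_range_succ, sum_range_zero, pow_zero, pow_one] at h
    linear_combination h
  have hζinv : ζ⁻¹ = ζ ^ 2 :=
    inv_eq_of_mul_eq_one_right (by rw [← pow_succ', hζ₃])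
  have hχ₁ : χ ≠ 1 := fun h ↦ by simp [h] at hχ
  have hχ₂ : χ * χ ≠ 1 := by
    rw [← sq]; exact pow_ne_one_of_lt_orderOf two_ne_zero (by omega)
  have hchar : ringChar ℂ ≠ ringChar (ZMod p) := by
    rw [ringChar.eq_zero, ZMod.ringChar_zmod_n]; exact (Fact.out : p.Prime).ne_zero.symm
  have hJ := jacobiSum_mul_jacobiSum_inv hchar hχ₁ hχ₁ hχ₂
  rw [hg.jacobiSum_self_eq_of_pow_three h3 χ hζ₃,
    hg.jacobiSum_self_eq_of_pow_three h3 χ⁻¹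
      (by rw [χ.inv_apply_eq_inv', inv_pow, hζ₃, inv_one]),
    χ.inv_apply_eq_inv', hζinv, ZMod.card] at hJ
  have hJ' : ((u : ℂ) + v * ζ + w * ζ ^ 2) * (u + v * ζ ^ 2 + w * (ζ ^ 2) ^ 2) = p := by
    rw [hu, hv, hw]; push_cast; linear_combination hJ
  apply Int.cast_injective (α := ℂ)
  push_cast
  linear_combination hJ'
    + (-v ^ 2 - w ^ 2 * (ζ ^ 3 + 1) - u * w * ζ - v * w * (ζ + ζ ^ 2) : ℂ) * hζ₃
    - (u * v + u * w + v * w : ℂ) * hζ₂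

lemma four_mul_eq_sq_add_27_mul_sq :
    4 * (p : ℤ) = (9 * #(transSet g 1 2) - p - 1) ^ 2
      + 27 * ((#(transSet g 0 2) : ℤ) - #(transSet g 0 1)) ^ 2 := by
  have hN := hg.norm_jacobiSum h3 rfl rfl rfl
  have h₀ := hg.sum_card_transSet_zero h3
  have h₁ := hg.sum_card_transSet_one h3
  have hm : 3 * ((p - 1) / 3) + 1 = p := by have := (Fact.out : p.Prime).one_lt; omega
  zify at h₀ h₁ hm
  -- With `u, v, w` as in `norm_jacobiSum`: `4 (u² + v² + w² - uv - vw - wu) = (2u - v - w)² +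
  -- 3 (v - w)²`, and the row sums turn `2u - v - w` into `9 n₁₂ - p - 1`.
  set a : ℤ := ((#(transSet g 0 0) : ℕ) : ℤ)
  set b : ℤ := ((#(transSet g 0 1) : ℕ) : ℤ)
  set c : ℤ := ((#(transSet g 0 2) : ℕ) : ℤ)
  set d : ℤ := ((#(transSet g 1 2) : ℕ) : ℤ)
  linear_combination (-4) * hN
    + (2 * a + 4 * d - 3 * b - 3 * c + (9 * d - p - 1)) * (2 * h₀ - 5 * h₁ - hm)

end IsGenerator

end

theorem stmt_7 (p : ℕ) (hp : p.Prime) (hp6 : p % 6 = 1)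
    (g : ZMod p) (hg : ∀ x : ZMod p, x ≠ 0 → ∃ j : ℕ, x = g ^ j)
    (A B : ℤ) (hA : A % 3 = 1) (hB : 0 < B) (hAB : 4 * (p : ℤ) = A ^ 2 + 27 * B ^ 2) :
    A = 9 * (transNum p g 1 1 2 : ℤ) - p - 1 ∧
    B = |(transNum p g 1 0 2 : ℤ) - (transNum p g 1 0 1 : ℤ)| := by
  have : Fact p.Prime := ⟨hp⟩
  have hgen : IsGenerator g := hg
  have h3 : 3 ∣ p - 1 := by omega
  simp only [transNum_one_eq_card (hgen.ne_zero (by omega))]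
  have hA' : (9 * (#(transSet g 1 2) : ℤ) - p - 1) % 3 = 1 := by omega
  refine Int.eq_of_sq_add_27_mul_sq_eq (Nat.prime_iff_prime_int.mp hp) hA hA' hB
    (abs_nonneg _) hAB ?_
  rw [sq_abs]
  exact hgen.four_mul_eq_sq_add_27_mul_sq h3
end

section
/- Let p be a prime with p ≡ 1 (mod 6) and 4p = A² + 27B², A ≡ 1 (mod 3), B > 0. With the cosets ordered so that n₀₂ > n₀₁, the transition numbers satisfy n₁₂ = n₂₁ = (p+A+1)/9, n₀₂ = n₂₀ = n₁₁ = (2p - A + 9B - 4)/18, n₀₁ = n₁₀ = n₂₂ = (2p - A - 9B - 4)/18, and n₀₀ + n₁₁ + n₂₂ = (p-4)/3. -/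
open Finset

lemma eq_of_four_mul_eq_sq_add_of_dvd {p A B A' B' : ℤ} (hp : 0 < p) (hB : 0 < B) (hB' : 0 < B')
    (h : 4 * p = A ^ 2 + 27 * B ^ 2) (h' : 4 * p = A' ^ 2 + 27 * B' ^ 2)
    (hdvd : p ∣ A * B' - A' * B) : A = A' ∧ B = B' := by
  have hsq : 16 * p ^ 2 = (A * A' + 27 * B * B') ^ 2 + 27 * (A * B' - A' * B) ^ 2 := by
    linear_combination (4 * p) * h + (A ^ 2 + 27 * B ^ 2) * h'
  have hcross : A * B' - A' * B = 0 := by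
    refine Int.eq_zero_of_abs_lt_dvd hdvd ?_
    rw [← abs_of_pos hp]
    exact sq_lt_sq.1 (by nlinarith [sq_nonneg (A * A' + 27 * B * B')])
  have hBB : B = B' := by
    have h4 : 4 * p * B ^ 2 = 4 * p * B' ^ 2 := by
      linear_combination B ^ 2 * h' - B' ^ 2 * h - (A * B' + A' * B) * hcross
    exact (pow_left_inj₀ hB.le hB'.le two_ne_zero).1 (mul_left_cancel₀ (by positivity) h4)
  subst hBB
  exact ⟨mul_right_cancel₀ hB.ne' (by linear_combination hcross), rfl⟩

lemma eq_of_four_mul_prime_eq_sq_add {p : ℕ} (hp : p.Prime) {A B A' B' : ℤ}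
    (hA : A % 3 = 1) (hA' : A' % 3 = 1) (hB : 0 < B) (hB' : 0 < B')
    (h : 4 * (p : ℤ) = A ^ 2 + 27 * B ^ 2) (h' : 4 * (p : ℤ) = A' ^ 2 + 27 * B' ^ 2) :
    A = A' ∧ B = B' := by
  have hp0 : (0 : ℤ) < p := by exact_mod_cast hp.pos
  have hdvd : (p : ℤ) ∣ (A * B' - A' * B) * (A * B' - (-A') * B) :=
    ⟨4 * (B' ^ 2 - B ^ 2), by linear_combination (-B' ^ 2) * h + B ^ 2 * h'⟩
  rcases (Nat.prime_iff_prime_int.mp hp).dvd_or_dvd hdvd with hd | hd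
  · exact eq_of_four_mul_eq_sq_add_of_dvd hp0 hB hB' h h' hd
  · obtain ⟨rfl, -⟩ := eq_of_four_mul_eq_sq_add_of_dvd hp0 hB hB' h (by linear_combination h') hd
    omega

lemma sum_range_pow_of_pow_eq_one {K : Type*} [Field K] [DecidableEq K] {n : ℕ} {z : K}
    (hz : z ^ n = 1) : ∑ m ∈ range n, z ^ m = if z = 1 then (n : K) else 0 := by
  split_ifs with h
  · simp [h]
  · rw [geom_sum_eq h, hz, sub_self, zero_div]

lemma ne_zero_of_forall_ne_zero_eq_pow {R : Type*} [Ring R] [Nontrivial R] {g : R}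
    (hg : ∀ x : R, x ≠ 0 → ∃ j : ℕ, x = g ^ j) (h : (-1 : R) ≠ 1) : g ≠ 0 := by
  rintro rfl
  obtain ⟨_ | j, hj⟩ := hg (-1) (neg_ne_zero.2 one_ne_zero)
  · exact h (hj.trans (pow_zero _))
  · exact neg_ne_zero.2 one_ne_zero (hj.trans (zero_pow j.succ_ne_zero))

namespace MulChar

variable {F : Type*} [Field F]

lemma orderOf_apply_eq_of_forall_ne_zero_eq_pow {R : Type*} [CommRing R] {χ : MulChar F R}
    {q : ℕ} [hq : Fact q.Prime] (hχ : orderOf χ = q) {g : F}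
    (hg : ∀ x : F, x ≠ 0 → ∃ j : ℕ, x = g ^ j) (hg0 : g ≠ 0) : orderOf (χ g) = q := by
  refine orderOf_eq_prime ?_ fun h1 ↦ hq.out.ne_one ?_
  · rw [← pow_apply' χ hq.out.ne_zero, ← hχ, pow_orderOf_eq_one, one_apply hg0.isUnit]
  · have : χ = 1 := MulChar.ext fun u ↦ by
      obtain ⟨j, hj⟩ := hg u u.ne_zero
      rw [one_apply_coe, hj, map_pow, h1, one_pow]
    rw [← hχ, this, orderOf_one]

lemma sum_range_pow_apply_mul_pow [DecidableEq F] {K : Type*} [Field K] [DecidableEq K]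
    {χ : MulChar F K} {n : ℕ} (hχ : χ ^ n = 1) {t : K} (ht : t ^ n = 1) (x : F) :
    ∑ m ∈ range n, (χ ^ m) x * t ^ m = if x ≠ 0 ∧ χ x * t = 1 then (n : K) else 0 := by
  rcases eq_or_ne x 0 with rfl | hx
  · simp
  · have hpow (m : ℕ) : (χ ^ m) x * t ^ m = (χ x * t) ^ m := by
      rw [mul_pow]
      congr 1
      simpa using χ.pow_apply_coe m hx.isUnit.unit
    simp only [hpow, ne_eq, hx, not_false_eq_true, true_and]
    refine sum_range_pow_of_pow_eq_one ?_
    rw [← hpow, ht, hχ, one_apply hx.isUnit, one_mul]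

end MulChar

lemma sum_apply_mul_apply_add_one_eq_jacobiSum {F R : Type*} [CommRing F] [Fintype F]
    [CommRing R] (ψ φ : MulChar F R) (hψ : ψ (-1) = 1) :
    ∑ x, ψ x * φ (x + 1) = jacobiSum ψ φ := by
  rw [jacobiSum, ← Equiv.sum_comp (Equiv.neg F)]
  refine Fintype.sum_congr _ _ fun x ↦ ?_
  rw [Equiv.neg_apply, neg_add_eq_sub, neg_eq_neg_one_mul x, map_mul, hψ, one_mul]

lemma jacobiSum_inv_inv {F : Type*} [CommRing F] [Fintype F] [DecidableEq F] (χ : MulChar F ℂ) :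
    jacobiSum χ⁻¹ χ⁻¹ = star (jacobiSum χ χ) := by
  rw [← MulChar.star_eq_inv]
  exact jacobiSum_ringHomComp χ χ (starRingEnd ℂ)

lemma sum_sum_pow_mul_jacobiSum_pow {F : Type*} [Field F] [Fintype F] [DecidableEq F]
    {χ : MulChar F ℂ} (hχ : χ ^ 3 = 1) (hχ1 : χ ≠ 1) (c d : ℂ) :
    ∑ m ∈ range 3, ∑ n ∈ range 3, c ^ m * d ^ n * jacobiSum (χ ^ m) (χ ^ n) =
      (Fintype.card F - 2) - (c + c ^ 2) - (d + d ^ 2) - (c * d ^ 2 + c ^ 2 * d)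
        + c * d * jacobiSum χ χ + c ^ 2 * d ^ 2 * star (jacobiSum χ χ) := by
  have hsq : χ ^ 2 = χ⁻¹ := eq_inv_of_mul_eq_one_left (by rw [← pow_succ, hχ])
  have hinv : χ⁻¹ ≠ 1 := inv_ne_one.2 hχ1
  have hneg : χ (-1) = 1 := MulChar.val_neg_one_eq_one_of_odd_order (by decide) hχ
  simp only [sum_range_succ, sum_range_zero, zero_add, pow_zero, pow_one, hsq]
  rw [jacobiSum_one_one, jacobiSum_one_nontrivial hχ1, jacobiSum_one_nontrivial hinv,
    jacobiSum_comm χ 1, jacobiSum_comm χ⁻¹ 1, jacobiSum_one_nontrivial hχ1,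
    jacobiSum_one_nontrivial hinv, jacobiSum_comm χ⁻¹ χ, jacobiSum_nontrivial_inv hχ1, hneg,
    jacobiSum_inv_inv]
  ring

lemma mem_adjoin_singleton_of_sq_add_self_add_one {R : Type*} [CommRing R] {ω : R}
    (hω : ω ^ 2 + ω + 1 = 0) {z : R} (hz : z ∈ Algebra.adjoin ℤ {ω}) :
    ∃ a b : ℤ, z = a + b * ω := by
  induction hz using Algebra.adjoin_induction with
  | mem x hx =>
    rw [Set.mem_singleton_iff] at hx
    exact ⟨0, 1, by rw [hx]; push_cast; ring⟩
  | algebraMap r => exact ⟨r, 0, by simp⟩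
  | add x y _ _ ihx ihy =>
    obtain ⟨a₁, b₁, rfl⟩ := ihx
    obtain ⟨a₂, b₂, rfl⟩ := ihy
    exact ⟨a₁ + a₂, b₁ + b₂, by push_cast; ring⟩
  | mul x y _ _ ihx ihy =>
    obtain ⟨a₁, b₁, rfl⟩ := ihx
    obtain ⟨a₂, b₂, rfl⟩ := ihy
    exact ⟨a₁ * a₂ - b₁ * b₂, a₁ * b₂ + a₂ * b₁ - b₁ * b₂, by
      push_cast; linear_combination (b₁ * b₂ : R) * hω⟩

lemma IsPrimitiveRoot.sq_add_self_add_one {R : Type*} [CommRing R] [IsDomain R] {ω : R}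
    (hω : IsPrimitiveRoot ω 3) : ω ^ 2 + ω + 1 = 0 := by
  have h := hω.geom_sum_eq_zero (by norm_num)
  simp only [sum_range_succ, sum_range_zero, zero_add, pow_zero, pow_one] at h
  linear_combination h

lemma IsPrimitiveRoot.star_eq_sq {ω : ℂ} (hω : IsPrimitiveRoot ω 3) : star ω = ω ^ 2 := by
  rw [Complex.star_def, ← Complex.inv_eq_conj (hω.norm'_eq_one three_ne_zero)]
  exact (eq_inv_of_mul_eq_one_left (by rw [← pow_succ, hω.pow_eq_one])).symm

lemma exists_jacobiSum_eq_of_pow_eq_one {F : Type*} [Field F] [Fintype F] {χ : MulChar F ℂ}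
    (hχ : χ ^ 3 = 1) (hF : 3 ∣ Fintype.card F - 1) {ω : ℂ} (hω : IsPrimitiveRoot ω 3) :
    ∃ u v : ℤ, jacobiSum χ χ = 3 * u - 1 + 3 * v * ω := by
  obtain ⟨z, hz, hJ⟩ := exists_jacobiSum_eq_neg_one_add (by norm_num) hχ hχ hF hω
  obtain ⟨a, b, rfl⟩ := mem_adjoin_singleton_of_sq_add_self_add_one hω.sq_add_self_add_one hz
  -- `(ω - 1)² = -3ω`
  refine ⟨b, b - a, ?_⟩
  rw [hJ]
  push_cast
  linear_combination ((a : ℂ) + b * ω - 3 * b) * hω.sq_add_self_add_one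

section Gcoset

variable {p : ℕ} [Fact p.Prime] {g : ZMod p}

lemma zero_notMem_Gcoset (hg0 : g ≠ 0) (k : ZMod 3) : (0 : ZMod p) ∉ Gcoset p g k := by
  rintro ⟨j, -, h⟩
  exact pow_ne_zero j hg0 h.symm

lemma transNum_eq_natCard (hg0 : g ≠ 0) (d : ℕ) (i k : ZMod 3) :
    transNum p g d i k = Nat.card {x : ZMod p // x ∈ Gcoset p g i ∧ x + d ∈ Gcoset p g k} := by
  refine Nat.card_congr
    { toFun := fun b ↦ ⟨b.1, b.2.2.2.2⟩
      invFun := fun x ↦ ⟨x.1.val, ?_⟩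
      left_inv := fun b ↦ Subtype.ext (ZMod.val_cast_of_lt (by have := b.2; omega))
      right_inv := fun x ↦ Subtype.ext (ZMod.natCast_zmod_val x.1) }
  obtain ⟨x, hi, hk⟩ := x
  dsimp only
  have hx0 : x.val ≠ 0 := by
    rw [ZMod.val_ne_zero]
    rintro rfl
    exact zero_notMem_Gcoset hg0 i hi
  have hxd : x.val + d ≠ p := by
    intro h
    apply zero_notMem_Gcoset hg0 k
    rwa [← ZMod.natCast_zmod_val x, ← Nat.cast_add, h, ZMod.natCast_self] at hk
  have := x.val_lt
  exact ⟨by omega, by omega, by omega, by simpa using hi, by simpa using hk⟩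

variable {K : Type*} [Field K] {χ : MulChar (ZMod p) K}

lemma mem_Gcoset_iff (hg : ∀ x : ZMod p, x ≠ 0 → ∃ j : ℕ, x = g ^ j) (hg0 : g ≠ 0)
    (hω : orderOf (χ g) = 3) {x : ZMod p} {i : ZMod 3} :
    x ∈ Gcoset p g i ↔ x ≠ 0 ∧ χ x = χ g ^ i.val := by
  have hfin : IsOfFinOrder (χ g) := orderOf_pos_iff.1 (by omega)
  constructor
  · rintro ⟨j, rfl, rfl⟩
    refine ⟨pow_ne_zero j hg0, ?_⟩
    rw [map_pow, hfin.pow_inj_mod, hω, ZMod.val_natCast, Nat.mod_mod]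
  · rintro ⟨hx, hχx⟩
    obtain ⟨j, rfl⟩ := hg x hx
    rw [map_pow, hfin.pow_inj_mod, hω] at hχx
    exact ⟨j, by rwa [← ZMod.natCast_zmod_val i, ZMod.natCast_eq_natCast_iff'], rfl⟩

open Classical in
lemma ite_mem_Gcoset_eq_sum (hg : ∀ x : ZMod p, x ≠ 0 → ∃ j : ℕ, x = g ^ j) (hg0 : g ≠ 0)
    (hχ : χ ^ 3 = 1) (hω : orderOf (χ g) = 3) (x : ZMod p) (i : ZMod 3) :
    (if x ∈ Gcoset p g i then 3 else 0 : K) =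
      ∑ m ∈ range 3, (χ ^ m) x * (χ g ^ (2 * i.val)) ^ m := by
  have hω3 : χ g ^ 3 = 1 := hω ▸ pow_orderOf_eq_one _
  have hinv : χ g ^ (2 * i.val) * χ g ^ i.val = 1 := by
    rw [← pow_add, show 2 * i.val + i.val = 3 * i.val by ring, pow_mul, hω3, one_pow]
  rw [MulChar.sum_range_pow_apply_mul_pow hχ (by rw [← pow_mul, mul_comm, pow_mul, hω3, one_pow]),
    Nat.cast_ofNat]
  refine if_congr ?_ rfl rfl
  rw [mem_Gcoset_iff hg hg0 hω]
  refine and_congr_right fun _ ↦ ⟨fun h ↦ ?_, fun h ↦ ?_⟩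
  · linear_combination χ g ^ (2 * i.val) * h + hinv
  · linear_combination χ g ^ i.val * h - χ x * hinv

lemma nine_mul_transNum_eq {χ : MulChar (ZMod p) ℂ} (hg : ∀ x : ZMod p, x ≠ 0 → ∃ j : ℕ, x = g ^ j)
    (hg0 : g ≠ 0) (hχ : χ ^ 3 = 1) (hχ1 : χ ≠ 1) (hω : orderOf (χ g) = 3) (i k : ZMod 3) :
    let c := χ g ^ (2 * i.val)
    let d := χ g ^ (2 * k.val)
    9 * (transNum p g 1 i k : ℂ) = (p - 2) - (c + c ^ 2) - (d + d ^ 2) - (c * d ^ 2 + c ^ 2 * d)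
        + c * d * jacobiSum χ χ + c ^ 2 * d ^ 2 * star (jacobiSum χ χ) := by
  classical
  intro c d
  have hneg (m : ℕ) : (χ ^ m) (-1) = 1 :=
    MulChar.val_neg_one_eq_one_of_odd_order (n := 3) (by decide)
      (by rw [← pow_mul, mul_comm, pow_mul, hχ, one_pow])
  calc 9 * (transNum p g 1 i k : ℂ)
      = ∑ x, (if x ∈ Gcoset p g i then 3 else 0 : ℂ) * (if x + 1 ∈ Gcoset p g k then 3 else 0) := by
        rw [transNum_eq_natCard hg0, Nat.card_eq_fintype_card, Fintype.card_subtype,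
          natCast_card_filter, mul_sum, Nat.cast_one]
        refine sum_congr rfl fun x _ ↦ ?_
        rw [ite_zero_mul_ite_zero]
        norm_num
    _ = ∑ x, (∑ m ∈ range 3, (χ ^ m) x * c ^ m) * ∑ n ∈ range 3, (χ ^ n) (x + 1) * d ^ n := by
        simp only [ite_mem_Gcoset_eq_sum hg hg0 hχ hω, c, d]
    _ = ∑ m ∈ range 3, ∑ n ∈ range 3, c ^ m * d ^ n * jacobiSum (χ ^ m) (χ ^ n) := by
        simp only [sum_mul_sum]
        simp only [← sum_apply_mul_apply_add_one_eq_jacobiSum _ _ (hneg _), mul_sum]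
        rw [sum_comm]
        refine sum_congr rfl fun m _ ↦ ?_
        rw [sum_comm]
        exact sum_congr rfl fun n _ ↦ sum_congr rfl fun x _ ↦ by ring
    _ = _ := by rw [sum_sum_pow_mul_jacobiSum_pow hχ hχ1, ZMod.card]

end Gcoset

/-- The trace `Tr(ω⁻ᵐ (a + bω))` for a primitive cube root of unity `ω`. -/
def cubicTrace (a b : ℤ) (m : ZMod 3) : ℤ := ![2 * a - b, 2 * b - a, -a - b] m

lemma intCast_cubicTrace_eq {ω : ℂ} (hω : IsPrimitiveRoot ω 3) (a b : ℤ) (i k : ZMod 3) :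
    let c := ω ^ (2 * i.val)
    let d := ω ^ (2 * k.val)
    ((3 - 3 * ((if i = 0 then 1 else 0) + (if k = 0 then 1 else 0) + (if i = k then 1 else 0))
      + cubicTrace a b (i + k) : ℤ) : ℂ) =
      -(c + c ^ 2) - (d + d ^ 2) - (c * d ^ 2 + c ^ 2 * d) + c * d * (a + b * ω)
        + c ^ 2 * d ^ 2 * (a + b * ω ^ 2) := by
  have hquad := hω.sq_add_self_add_one
  have hω3 := hω.pow_eq_one
  obtain rfl | rfl | rfl : i = 0 ∨ i = 1 ∨ i = 2 := by revert i; decide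
  all_goals obtain rfl | rfl | rfl : k = 0 ∨ k = 1 ∨ k = 2 := by revert k; decide
  all_goals
    reduce_mod_char
    simp +decide only [ZMod.val_zero, ZMod.val_one, ZMod.val_ofNat, Nat.reduceMod, Nat.reduceMul,
      cubicTrace, Matrix.cons_val, ↓reduceIte]
    push_cast
    grind

lemma exists_nine_mul_transNum_eq {p : ℕ} [Fact p.Prime] (hp : p % 3 = 1) {g : ZMod p}
    (hg : ∀ x : ZMod p, x ≠ 0 → ∃ j : ℕ, x = g ^ j) (hg0 : g ≠ 0) :
    ∃ u v : ℤ, (p : ℤ) = (3 * u - 1) ^ 2 - 3 * v * (3 * u - 1) + 9 * v ^ 2 ∧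
      ∀ i k : ZMod 3, 9 * (transNum p g 1 i k : ℤ) = p + 1
        - 3 * ((if i = 0 then 1 else 0) + (if k = 0 then 1 else 0) + (if i = k then 1 else 0))
        + cubicTrace (3 * u - 1) (3 * v) (i + k) := by
  have hF : 3 ∣ Fintype.card (ZMod p) - 1 := by rw [ZMod.card]; omega
  obtain ⟨χ, hχ⟩ := MulChar.exists_mulChar_orderOf (ZMod p) hF
    (Complex.isPrimitiveRoot_exp 3 (by norm_num))
  have hχ3 : χ ^ 3 = 1 := hχ ▸ pow_orderOf_eq_one χ
  have hχ1 : χ ≠ 1 := by simpa using pow_ne_one_of_lt_orderOf one_ne_zero (hχ ▸ by norm_num)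
  have hχ2 : χ * χ ≠ 1 := by
    simpa [sq] using pow_ne_one_of_lt_orderOf two_ne_zero (hχ ▸ by norm_num)
  have hω := MulChar.orderOf_apply_eq_of_forall_ne_zero_eq_pow hχ hg hg0
  have hprim : IsPrimitiveRoot (χ g) 3 := hω ▸ IsPrimitiveRoot.orderOf (χ g)
  obtain ⟨u, v, hJ⟩ := exists_jacobiSum_eq_of_pow_eq_one hχ3 hF hprim
  have hJ' : star (jacobiSum χ χ) = 3 * u - 1 + 3 * v * χ g ^ 2 := by
    rw [hJ]; simp [hprim.star_eq_sq]
  refine ⟨u, v, ?_, fun i k ↦ ?_⟩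
  · have hchar : ringChar ℂ ≠ ringChar (ZMod p) := by
      rw [ringChar.eq ℂ 0, ZMod.ringChar_zmod_n]
      exact (Fact.out : p.Prime).ne_zero.symm
    have hnorm := jacobiSum_mul_jacobiSum_inv hchar hχ1 hχ1 hχ2
    rw [jacobiSum_inv_inv, hJ', hJ, ZMod.card] at hnorm
    apply Int.cast_injective (α := ℂ)
    push_cast
    linear_combination -hnorm + (9 * u * v - 3 * v : ℂ) * hprim.sq_add_self_add_one
      + 9 * (v : ℂ) ^ 2 * hprim.pow_eq_one
  · have h := nine_mul_transNum_eq hg hg0 hχ3 hχ1 hω i k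
    have htr := intCast_cubicTrace_eq hprim (3 * u - 1) (3 * v) i k
    rw [hJ', hJ] at h
    apply Int.cast_injective (α := ℂ)
    push_cast at h htr ⊢
    linear_combination h - htr

theorem stmt_9 (p : ℕ) (hp : p.Prime) (hp6 : p % 6 = 1)
    (g : ZMod p) (hg : ∀ x : ZMod p, x ≠ 0 → ∃ j : ℕ, x = g ^ j)
    (A B : ℤ) (hA : A % 3 = 1) (hB : 0 < B) (hAB : 4 * (p : ℤ) = A ^ 2 + 27 * B ^ 2)
    (horder : transNum p g 1 0 2 > transNum p g 1 0 1) :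
    9 * (transNum p g 1 1 2 : ℤ) = p + A + 1 ∧
    9 * (transNum p g 1 2 1 : ℤ) = p + A + 1 ∧
    18 * (transNum p g 1 0 2 : ℤ) = 2 * p - A + 9 * B - 4 ∧
    18 * (transNum p g 1 2 0 : ℤ) = 2 * p - A + 9 * B - 4 ∧
    18 * (transNum p g 1 1 1 : ℤ) = 2 * p - A + 9 * B - 4 ∧
    18 * (transNum p g 1 0 1 : ℤ) = 2 * p - A - 9 * B - 4 ∧
    18 * (transNum p g 1 1 0 : ℤ) = 2 * p - A - 9 * B - 4 ∧
    18 * (transNum p g 1 2 2 : ℤ) = 2 * p - A - 9 * B - 4 ∧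
    3 * ((transNum p g 1 0 0 : ℤ) + transNum p g 1 1 1 + transNum p g 1 2 2) = p - 4 := by
  have : Fact p.Prime := ⟨hp⟩
  have : Fact (2 < p) := ⟨by have := hp.two_le; omega⟩
  have hg0 : g ≠ 0 := ne_zero_of_forall_ne_zero_eq_pow hg ZMod.neg_one_ne_one
  obtain ⟨u, v, hnorm, hn⟩ := exists_nine_mul_transNum_eq (by omega) hg hg0
  have h00 := hn 0 0; have h01 := hn 0 1; have h02 := hn 0 2
  have h10 := hn 1 0; have h11 := hn 1 1; have h12 := hn 1 2
  have h20 := hn 2 0; have h21 := hn 2 1; have h22 := hn 2 2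
  reduce_mod_char at h00 h01 h02 h10 h11 h12 h20 h21 h22
  simp +decide only [cubicTrace, Matrix.cons_val, ↓reduceIte] at h00 h01 h02 h10 h11 h12 h20 h21 h22
  -- `horder` forces `v < 0`
  obtain ⟨rfl, rfl⟩ := eq_of_four_mul_prime_eq_sq_add hp hA (A' := 6 * u - 3 * v - 2) (B' := -v)
    (by omega) hB (by omega) hAB (by linear_combination 4 * hnorm)
  omega
end
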